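/- Let α ∈ (0,1). (a) The function t ↦ |(ω(t)−c)(ω(t)−1/c)/ω(t)|, where ω(t) = α/c + R_α e^{it}, is strictly increasing on the interval (0, π) (equivalently, Re log((ζ−c)(ζ−1/c)/ζ) strictly decreases as ζ moves from left to right along the upper half of the circle |ζ − α/c| = R_α). (b) Let θ₁ ∈ (0, π) be determined by r₊ = 1/c + R₁e^{iθ₁}. Then the function t ↦ |ζ(t)/((ζ(t)−αc)(ζ(t)−α/c))|, where ζ(t) = 1/c + R₁e^{it}, is strictly increasing on the interval (0, θ₁) (equivalently, Re log(ζ/((ζ−αc)(ζ−α/c))) strictly decreases as ζ moves from left to right along the open arc of the circle |ζ − 1/c| = R₁ in the upper half-plane with Re ζ > Re r₊). -/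

import Mathlib

open Complex

noncomputable def cc (α : ℝ) : ℝ := Real.sqrt (α / (1 - α + α ^ 2))
noncomputable def Ra (α : ℝ) : ℝ := (1 - α) * Real.sqrt α
noncomputable def R1 (α : ℝ) : ℝ := (1 - α) / Real.sqrt α
noncomputable def rp (α : ℝ) : ℂ :=
  (cc α : ℂ) * ((1 + (α : ℂ)) / 2 + Complex.I * (Real.sqrt 3 : ℂ) * ((1 - (α : ℂ)) / 2))

/-- Parametrization of the circle `|ζ − 1/c| = R₁`. -/
noncomputable def zeta1 (α t : ℝ) : ℂ :=
  1 / (cc α : ℂ) + (R1 α : ℂ) * Complex.exp (Complex.I * (t : ℂ))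

/-- Parametrization of the circle `|ω − α/c| = R_α`. -/
noncomputable def omegaA (α t : ℝ) : ℂ :=
  (α : ℂ) / (cc α : ℂ) + (Ra α : ℂ) * Complex.exp (Complex.I * (t : ℂ))

/-!
The circle `|ω − α/c| = R_α` is an Apollonius circle of the points `c` and `1/c`:
`|ω − c| = √α c |ω − 1/c|` on it, so `|(ω−c)(ω−1/c)/ω| = √α c |ω − 1/c|² / |ω|`. Both `1/c` and `0`
are real, `1/c` to the right and `0` to the left of the centre, so along the upper half circle
`|ω − 1/c|` grows while `|ω|` shrinks.

Likewise `|ζ − αc| = (c/√α) |ζ − α/c|` on the circle `|ζ − 1/c| = R₁`, and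
`(1 − α)|ζ|² = (1 − α)α² + |ζ − α/c|²` there, so `|ζ/((ζ−αc)(ζ−α/c))|²` is a decreasing function
of `|ζ − α/c|`, which shrinks along the upper half circle.
-/

open Set

lemma normSq_ofReal_add_mul_exp_I (a R t : ℝ) :
    normSq ((a : ℂ) + R * exp (I * t)) = a ^ 2 + R ^ 2 + 2 * a * R * Real.cos t := by
  rw [mul_comm I, exp_mul_I, ← ofReal_cos, ← ofReal_sin]
  simp only [normSq_apply, add_re, add_im, mul_re, mul_im, ofReal_re, ofReal_im, I_re, I_im]
  linear_combination R ^ 2 * Real.sin_sq_add_cos_sq t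

lemma strictMonoOn_normSq_ofReal_add_mul_exp_I {a R : ℝ} (h : a * R < 0) :
    StrictMonoOn (fun t : ℝ => normSq ((a : ℂ) + R * exp (I * t))) (Icc 0 Real.pi) := by
  intro s hs t ht hst
  have := Real.strictAntiOn_cos hs ht hst
  simp only [normSq_ofReal_add_mul_exp_I]
  nlinarith

lemma strictAntiOn_normSq_ofReal_add_mul_exp_I {a R : ℝ} (h : 0 < a * R) :
    StrictAntiOn (fun t : ℝ => normSq ((a : ℂ) + R * exp (I * t))) (Icc 0 Real.pi) := by
  intro s hs t ht hst
  have := Real.strictAntiOn_cos hs ht hst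
  simp only [normSq_ofReal_add_mul_exp_I]
  nlinarith

lemma StrictMonoOn.norm_of_normSq {ι : Type*} [Preorder ι] {f : ι → ℂ} {s : Set ι}
    (h : StrictMonoOn (fun t => normSq (f t)) s) : StrictMonoOn (fun t => ‖f t‖) s :=
  fun _ ha _ hb hab => Real.sqrt_lt_sqrt (normSq_nonneg _) (h ha hb hab)

lemma one_sub_add_sq_pos (α : ℝ) : 0 < 1 - α + α ^ 2 := by
  nlinarith [sq_nonneg (α - 1 / 2)]

lemma cc_pos {α : ℝ} (hα : 0 < α) : 0 < cc α :=
  Real.sqrt_pos.2 (div_pos hα (one_sub_add_sq_pos α))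

lemma cc_sq_mul {α : ℝ} (hα : 0 ≤ α) : cc α ^ 2 * (1 - α + α ^ 2) = α := by
  have hD := one_sub_add_sq_pos α
  rw [cc, Real.sq_sqrt (div_nonneg hα hD.le), div_mul_cancel₀ _ hD.ne']

lemma Ra_sq {α : ℝ} (hα : 0 ≤ α) : Ra α ^ 2 = α * (1 - α) ^ 2 := by
  rw [Ra, mul_pow, Real.sq_sqrt hα]; ring

lemma R1_sq_mul {α : ℝ} (hα : 0 < α) : R1 α ^ 2 * α = (1 - α) ^ 2 := by
  rw [R1, div_pow, Real.sq_sqrt hα.le, div_mul_cancel₀ _ hα.ne']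

lemma omegaA_sub_ofReal (α t p : ℝ) :
    omegaA α t - p = ((α / cc α - p : ℝ) : ℂ) + Ra α * exp (I * t) := by
  rw [omegaA]; push_cast; ring

lemma zeta1_sub_ofReal (α t p : ℝ) :
    zeta1 α t - p = ((1 / cc α - p : ℝ) : ℂ) + R1 α * exp (I * t) := by
  rw [zeta1]; push_cast; ring

lemma normSq_omegaA_sub_cc {α : ℝ} (hα : 0 < α) (t : ℝ) :
    normSq (omegaA α t - cc α) = α * cc α ^ 2 * normSq (omegaA α t - 1 / (cc α : ℂ)) := by
  have hc := cc_pos hα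
  rw [← ofReal_one, ← ofReal_div, omegaA_sub_ofReal, omegaA_sub_ofReal,
    normSq_ofReal_add_mul_exp_I, normSq_ofReal_add_mul_exp_I]
  field_simp
  linear_combination
    (-(α - cc α ^ 2 * (1 + α - α ^ 2)) - 2 * cc α * Ra α * Real.cos t) * cc_sq_mul hα.le
    + cc α ^ 2 * (1 - α * cc α ^ 2) * Ra_sq hα.le

lemma normSq_zeta1_sub_mul_cc {α : ℝ} (hα : 0 < α) (t : ℝ) :
    normSq (zeta1 α t - α * cc α) = cc α ^ 2 / α * normSq (zeta1 α t - α / (cc α : ℂ)) := by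
  have hc := cc_pos hα
  rw [← ofReal_mul, ← ofReal_div, zeta1_sub_ofReal, zeta1_sub_ofReal,
    normSq_ofReal_add_mul_exp_I, normSq_ofReal_add_mul_exp_I]
  field_simp
  refine mul_left_cancel₀ hα.ne' ?_
  linear_combination
    (-(α - cc α ^ 2 * (α ^ 2 + α - 1)) - 2 * α * cc α * R1 α * Real.cos t) * cc_sq_mul hα.le
    + cc α ^ 2 * (α - cc α ^ 2) * R1_sq_mul hα

lemma one_sub_mul_normSq_zeta1 {α : ℝ} (hα : 0 < α) (t : ℝ) :
    (1 - α) * normSq (zeta1 α t) = (1 - α) * α ^ 2 + normSq (zeta1 α t - α / (cc α : ℂ)) := by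
  have hc := cc_pos hα
  have hζ := zeta1_sub_ofReal α t 0
  rw [ofReal_zero, sub_zero] at hζ
  rw [← ofReal_div, zeta1_sub_ofReal, hζ,
    normSq_ofReal_add_mul_exp_I, normSq_ofReal_add_mul_exp_I]
  field_simp
  linear_combination -(1 - α) * cc_sq_mul hα.le - cc α ^ 2 * R1_sq_mul hα

lemma Ra_pos {α : ℝ} (hα0 : 0 < α) (hα1 : α < 1) : 0 < Ra α :=
  mul_pos (sub_pos.2 hα1) (Real.sqrt_pos.2 hα0)

lemma R1_pos {α : ℝ} (hα0 : 0 < α) (hα1 : α < 1) : 0 < R1 α :=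
  div_pos (sub_pos.2 hα1) (Real.sqrt_pos.2 hα0)

lemma strictMonoOn_normSq_omegaA_sub_inv_cc {α : ℝ} (hα0 : 0 < α) (hα1 : α < 1) :
    StrictMonoOn (fun t => normSq (omegaA α t - 1 / (cc α : ℂ))) (Icc 0 Real.pi) := by
  simp only [← ofReal_one, ← ofReal_div, omegaA_sub_ofReal]
  refine strictMonoOn_normSq_ofReal_add_mul_exp_I (mul_neg_of_neg_of_pos ?_ (Ra_pos hα0 hα1))
  rw [← sub_div]
  exact div_neg_of_neg_of_pos (by linarith) (cc_pos hα0)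

lemma strictAntiOn_normSq_omegaA {α : ℝ} (hα0 : 0 < α) (hα1 : α < 1) :
    StrictAntiOn (fun t => normSq (omegaA α t)) (Icc 0 Real.pi) := by
  simpa only [omegaA, ofReal_div] using strictAntiOn_normSq_ofReal_add_mul_exp_I
    (mul_pos (div_pos hα0 (cc_pos hα0)) (Ra_pos hα0 hα1))

lemma strictAntiOn_normSq_zeta1_sub_div_cc {α : ℝ} (hα0 : 0 < α) (hα1 : α < 1) :
    StrictAntiOn (fun t => normSq (zeta1 α t - α / (cc α : ℂ))) (Icc 0 Real.pi) := by
  simp only [← ofReal_div, zeta1_sub_ofReal]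
  refine strictAntiOn_normSq_ofReal_add_mul_exp_I (mul_pos ?_ (R1_pos hα0 hα1))
  rw [← sub_div]
  exact div_pos (by linarith) (cc_pos hα0)

lemma normSq_omegaA_quotient {α : ℝ} (hα : 0 < α) (t : ℝ) :
    normSq ((omegaA α t - cc α) * (omegaA α t - 1 / (cc α : ℂ)) / omegaA α t) =
      α * cc α ^ 2 * normSq (omegaA α t - 1 / (cc α : ℂ)) ^ 2 / normSq (omegaA α t) := by
  rw [map_div₀, map_mul, normSq_omegaA_sub_cc hα]
  ring

lemma normSq_zeta1_quotient {α : ℝ} (hα0 : 0 < α) (hα1 : α < 1) (t : ℝ) :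
    normSq (zeta1 α t / ((zeta1 α t - α * cc α) * (zeta1 α t - α / (cc α : ℂ)))) =
      α / cc α ^ 2 * (α ^ 2 / normSq (zeta1 α t - α / (cc α : ℂ)) ^ 2
        + 1 / ((1 - α) * normSq (zeta1 α t - α / (cc α : ℂ)))) := by
  have hc := cc_pos hα0
  have hζ := one_sub_mul_normSq_zeta1 hα0 t
  rw [map_div₀, map_mul, normSq_zeta1_sub_mul_cc hα0]
  set ρ := normSq (zeta1 α t - α / (cc α : ℂ))
  rcases eq_or_ne ρ 0 with hρ | hρ
  · simp [hρ] -- both sides are `0`, as `x / 0 = 0`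
  have : 1 - α ≠ 0 := by linarith
  field_simp
  linear_combination hζ

lemma strictMonoOn_norm_omegaA_quotient {α : ℝ} (hα0 : 0 < α) (hα1 : α < 1) :
    StrictMonoOn (fun t : ℝ =>
        ‖(omegaA α t - (cc α : ℂ)) * (omegaA α t - 1 / (cc α : ℂ)) / omegaA α t‖)
      (Ioo 0 Real.pi) := by
  refine StrictMonoOn.norm_of_normSq fun t₁ h₁ t₂ h₂ h₁₂ => ?_
  have hρ := strictMonoOn_normSq_omegaA_sub_inv_cc hα0 hα1
    (Ioo_subset_Icc_self h₁) (Ioo_subset_Icc_self h₂) h₁₂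
  have hN := strictAntiOn_normSq_omegaA hα0 hα1
    (Ioo_subset_Icc_self h₁) (Ioo_subset_Icc_self h₂) h₁₂
  have hN₂ : 0 < normSq (omegaA α t₂) := (normSq_nonneg _).trans_lt
    (strictAntiOn_normSq_omegaA hα0 hα1 (Ioo_subset_Icc_self h₂)
      (right_mem_Icc.2 Real.pi_pos.le) h₂.2)
  have hc := cc_pos hα0
  simp only [normSq_omegaA_quotient hα0]
  gcongr
  exact normSq_nonneg _

lemma strictMonoOn_norm_zeta1_quotient {α : ℝ} (hα0 : 0 < α) (hα1 : α < 1) :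
    StrictMonoOn (fun t : ℝ =>
        ‖zeta1 α t /
          ((zeta1 α t - (α : ℂ) * (cc α : ℂ)) * (zeta1 α t - (α : ℂ) / (cc α : ℂ)))‖)
      (Ioo 0 Real.pi) := by
  refine StrictMonoOn.norm_of_normSq fun t₁ h₁ t₂ h₂ h₁₂ => ?_
  have hρ := strictAntiOn_normSq_zeta1_sub_div_cc hα0 hα1
    (Ioo_subset_Icc_self h₁) (Ioo_subset_Icc_self h₂) h₁₂
  have hρ₂ : 0 < normSq (zeta1 α t₂ - α / (cc α : ℂ)) := (normSq_nonneg _).trans_lt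
    (strictAntiOn_normSq_zeta1_sub_div_cc hα0 hα1 (Ioo_subset_Icc_self h₂)
      (right_mem_Icc.2 Real.pi_pos.le) h₂.2)
  have hc := cc_pos hα0
  have hα1' : 0 < 1 - α := sub_pos.2 hα1
  simp only [normSq_zeta1_quotient hα0 hα1]
  gcongr

theorem strict_mono_abs_on_circles_general (α : ℝ) (hα0 : 0 < α) (hα1 : α < 1)
    (θ₁ : ℝ) (hθ₁π : θ₁ < Real.pi) :
    StrictMonoOn (fun t : ℝ =>
        ‖(omegaA α t - (cc α : ℂ)) * (omegaA α t - 1 / (cc α : ℂ)) / omegaA α t‖)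
      (Set.Ioo 0 Real.pi) ∧
    StrictMonoOn (fun t : ℝ =>
        ‖zeta1 α t /
          ((zeta1 α t - (α : ℂ) * (cc α : ℂ)) * (zeta1 α t - (α : ℂ) / (cc α : ℂ)))‖)
      (Set.Ioo 0 θ₁) :=
  ⟨strictMonoOn_norm_omegaA_quotient hα0 hα1,
    (strictMonoOn_norm_zeta1_quotient hα0 hα1).mono (Ioo_subset_Ioo_right hθ₁π.le)⟩

/-- Strict monotonicity of `|(ω−c)(ω−1/c)/ω|` on the upper half of the circle `γ_α`
and of `|ζ/((ζ−αc)(ζ−α/c))|` on the arc of `γ₁` between the angles `0` and `θ₁`,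
where `r₊ = 1/c + R₁ e^{iθ₁}`. -/
theorem strict_mono_abs_on_circles (α : ℝ) (hα0 : 0 < α) (hα1 : α < 1)
    (θ₁ : ℝ) (hθ₁0 : 0 < θ₁) (hθ₁π : θ₁ < Real.pi)
    (hθ₁ : rp α = 1 / (cc α : ℂ) + (R1 α : ℂ) * Complex.exp (Complex.I * (θ₁ : ℂ))) :
    StrictMonoOn (fun t : ℝ =>
        ‖(omegaA α t - (cc α : ℂ)) * (omegaA α t - 1 / (cc α : ℂ)) / omegaA α t‖)
      (Set.Ioo 0 Real.pi) ∧
    StrictMonoOn (fun t : ℝ =>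
        ‖zeta1 α t /
          ((zeta1 α t - (α : ℂ) * (cc α : ℂ)) * (zeta1 α t - (α : ℂ) / (cc α : ℂ)))‖)
      (Set.Ioo 0 θ₁) :=
  strict_mono_abs_on_circles_general α hα0 hα1 θ₁ hθ₁π
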